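/- arXiv:2508.05455 — 4 statements merged into one kernel-verified Lean document; each statement's English description precedes it below -/
import Mathlib

section
/- Let p be a prime and let R be a ring with exactly p² elements such that p•x = 0 for every x ∈ R. Then the following are equivalent: (i) R is the union of some finite family of proper left ideals; (ii) every additive subgroup of R of order p is a left ideal of R. Moreover, if these hold, then R is the union of p + 1 proper left ideals, and R is not the union of any p proper left ideals. -/
/-!
Since `p • x = 0`, the additive group of `R` is a plane over `𝔽_p`. Its proper subgroups are `0`
and the lines, i.e. the subgroups of order `p`; there are `p + 1` of them and they partition the
nonzero elements, each contributing `p - 1`. A proper left ideal containing `x ≠ 0` must be the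
line through `x`, so a cover by proper left ideals forces every line to be a left ideal; conversely,
if every line is a left ideal, the lines form a cover of size `p + 1`. No `p` proper subgroups
cover `R`, since together they have at most `p (p - 1) < p ^ 2 - 1` nonzero elements.
-/

/-- A left ideal of a (possibly non-unital, non-commutative) ring `R`:
an additive subgroup closed under left multiplication by arbitrary ring elements. -/
def IsLeftIdeal {R : Type*} [NonUnitalRing R] (I : AddSubgroup R) : Prop :=
  ∀ (r : R) ⦃x : R⦄, x ∈ I → r * x ∈ I

/-- A right ideal of a (possibly non-unital, non-commutative) ring `R`:
an additive subgroup closed under right multiplication by arbitrary ring elements. -/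
def IsRightIdeal {R : Type*} [NonUnitalRing R] (I : AddSubgroup R) : Prop :=
  ∀ (r : R) ⦃x : R⦄, x ∈ I → x * r ∈ I

/-- A two-sided ideal: both a left and a right ideal. -/
def IsTwoSidedIdeal {R : Type*} [NonUnitalRing R] (I : AddSubgroup R) : Prop :=
  IsLeftIdeal I ∧ IsRightIdeal I

namespace AddSubgroup

variable {G : Type*} [AddGroup G] {p : ℕ}

theorem eq_zmultiples_of_card_eq_prime (hp : p.Prime) {H : AddSubgroup G} (hH : Nat.card H = p)
    {x : G} (hx : x ∈ H) (hx0 : x ≠ 0) : H = zmultiples x := by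
  have : Finite H := Nat.finite_of_card_ne_zero (hH ▸ hp.ne_zero)
  have hle : zmultiples x ≤ H := zmultiples_le_of_mem hx
  refine (eq_of_le_of_card_ge hle ?_).symm
  rcases (Nat.dvd_prime hp).mp (hH ▸ card_dvd_of_le hle) with h | h
  · exact absurd (zmultiples_eq_bot.mp (card_eq_one.mp h)) hx0
  · exact hH ▸ h.ge

theorem card_le_of_ne_top_of_card_eq_sq (hp : p.Prime) (hG : Nat.card G = p ^ 2)
    {H : AddSubgroup G} (hH : H ≠ ⊤) : Nat.card H ≤ p := by
  have : Finite G := Nat.finite_of_card_ne_zero (hG ▸ pow_ne_zero 2 hp.ne_zero)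
  obtain ⟨k, hk, hHk⟩ := (Nat.dvd_prime_pow hp).mp (hG ▸ card_addSubgroup_dvd_card H)
  have hk2 : k ≠ 2 := by
    rintro rfl
    exact hH (eq_top_of_card_eq H (hHk.trans hG.symm))
  calc Nat.card H = p ^ k := hHk
    _ ≤ p ^ 1 := Nat.pow_le_pow_right hp.pos (by omega)
    _ = p := pow_one p

theorem ncard_coe_diff_zero (H : AddSubgroup G) : ((H : Set G) \ {0}).ncard = Nat.card H - 1 := by
  rw [Set.ncard_sdiff_singleton_of_mem H.zero_mem]
  rfl

theorem card_sub_one_le_sum_of_forall_exists_mem [Finite G] {ι : Type*} [Fintype ι]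
    (f : ι → AddSubgroup G) (hcov : ∀ x, ∃ i, x ∈ f i) :
    Nat.card G - 1 ≤ ∑ i, (Nat.card (f i) - 1) := by
  have hunion : ⋃ i, ((f i : Set G) \ {0}) = {0}ᶜ := by
    ext x
    simpa [and_comm] using fun _ => hcov x
  calc Nat.card G - 1 = ({0}ᶜ : Set G).ncard := by rw [Set.ncard_compl, Set.ncard_singleton]
    _ ≤ ∑ i, ((f i : Set G) \ {0}).ncard := hunion ▸ Set.ncard_iUnion_le_of_fintype _
    _ = ∑ i, (Nat.card (f i) - 1) := by simp_rw [ncard_coe_diff_zero]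

theorem not_forall_exists_mem_of_card_eq_prime_sq (hp : p.Prime) (hG : Nat.card G = p ^ 2)
    (f : Fin p → AddSubgroup G) (hf : ∀ i, f i ≠ ⊤) : ¬ ∀ x, ∃ i, x ∈ f i := by
  have : Finite G := Nat.finite_of_card_ne_zero (hG ▸ pow_ne_zero 2 hp.ne_zero)
  intro hcov
  have hbound : p ^ 2 - 1 ≤ p * (p - 1) :=
    calc p ^ 2 - 1 = Nat.card G - 1 := by rw [hG]
      _ ≤ ∑ i, (Nat.card (f i) - 1) := card_sub_one_le_sum_of_forall_exists_mem f hcov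
      _ ≤ ∑ _i : Fin p, (p - 1) := Finset.sum_le_sum fun i _ =>
          Nat.sub_le_sub_right (card_le_of_ne_top_of_card_eq_sq hp hG (hf i)) 1
      _ = p * (p - 1) := by simp
  have hp2 : p ≤ p ^ 2 := Nat.le_self_pow two_ne_zero p
  rw [Nat.mul_sub_one, ← sq] at hbound
  have := hp.two_le
  omega

theorem card_subgroups_card_eq_prime_mul_sub_one [Finite G] (hp : p.Prime) (hexp : ∀ x : G, p • x = 0) :
    Nat.card {H : AddSubgroup G // Nat.card H = p} * (p - 1) = Nat.card G - 1 := by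
  have : Fact p.Prime := ⟨hp⟩
  set L : Set (AddSubgroup G) := {H | Nat.card H = p}
  have hunion : ⋃ H ∈ L, ((H : Set G) \ {0}) = {0}ᶜ := by
    ext x
    simp only [Set.mem_iUnion, Set.mem_sdiff, SetLike.mem_coe, Set.mem_singleton_iff,
      Set.mem_compl_iff, exists_prop]
    refine ⟨fun ⟨_, _, _, hx0⟩ => hx0, fun hx0 => ⟨zmultiples x, ?_, mem_zmultiples x, hx0⟩⟩
    rw [Set.mem_ofPred_eq, Nat.card_zmultiples, addOrderOf_eq_prime (hexp x) hx0]
  have hdisj : L.PairwiseDisjoint fun H => (H : Set G) \ {0} := by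
    intro H hH K hK hHK
    refine Set.disjoint_left.mpr fun x hxH hxK => hHK ?_
    exact (eq_zmultiples_of_card_eq_prime hp hH hxH.1 hxH.2).trans
      (eq_zmultiples_of_card_eq_prime hp hK hxK.1 hxK.2).symm
  have hL : L.Finite := Set.toFinite L
  calc Nat.card L * (p - 1) = ∑ _H ∈ hL.toFinset, (p - 1) := by
        rw [Finset.sum_const, smul_eq_mul, Nat.card_coe_set_eq, Set.ncard_eq_toFinset_card L hL]
    _ = ∑ᶠ H ∈ L, ((H : Set G) \ {0}).ncard := by
        rw [finsum_mem_eq_finite_toFinset_sum _ hL]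
        refine Finset.sum_congr rfl fun H hH => ?_
        rw [ncard_coe_diff_zero, (hL.mem_toFinset.mp hH : Nat.card H = p)]
    _ = ({0}ᶜ : Set G).ncard := by
        rw [← hunion, hL.ncard_biUnion (fun _ _ => Set.toFinite _) hdisj]
    _ = Nat.card G - 1 := by rw [Set.ncard_compl, Set.ncard_singleton]

end AddSubgroup

section LeftIdealCover

variable {R : Type*} [NonUnitalRing R] {p : ℕ}

def IsProperLeftIdealCover {ι : Type*} (f : ι → AddSubgroup R) : Prop :=
  (∀ i, IsLeftIdeal (f i) ∧ f i ≠ ⊤) ∧ ∀ x : R, ∃ i, x ∈ f i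

theorem IsProperLeftIdealCover.isLeftIdeal_of_card_eq_prime (hp : p.Prime)
    (hR : Nat.card R = p ^ 2) {ι : Type*} {f : ι → AddSubgroup R} (hf : IsProperLeftIdealCover f)
    {I : AddSubgroup R} (hI : Nat.card I = p) : IsLeftIdeal I := by
  obtain hI_bot | ⟨x, hxI, hx0⟩ := I.bot_or_exists_ne_zero
  · exact absurd (AddSubgroup.card_eq_one.mpr hI_bot ▸ hI) hp.one_lt.ne
  obtain ⟨i, hxi⟩ := hf.2 x
  have hIi : I ≤ f i :=
    AddSubgroup.eq_zmultiples_of_card_eq_prime hp hI hxI hx0 ▸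
      AddSubgroup.zmultiples_le_of_mem hxi
  have : Finite R := Nat.finite_of_card_ne_zero (hR ▸ pow_ne_zero 2 hp.ne_zero)
  have hI_eq : I = f i := AddSubgroup.eq_of_le_of_card_ge hIi
    (hI ▸ AddSubgroup.card_le_of_ne_top_of_card_eq_sq hp hR (hf.1 i).2)
  exact hI_eq ▸ (hf.1 i).1

theorem exists_isProperLeftIdealCover_fin_succ (hp : p.Prime) (hR : Nat.card R = p ^ 2)
    (hexp : ∀ x : R, p • x = 0) (h : ∀ I : AddSubgroup R, Nat.card I = p → IsLeftIdeal I) :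
    ∃ f : Fin (p + 1) → AddSubgroup R, IsProperLeftIdealCover f := by
  have : Fact p.Prime := ⟨hp⟩
  have : Finite R := Nat.finite_of_card_ne_zero (hR ▸ pow_ne_zero 2 hp.ne_zero)
  have hlines : Nat.card {I : AddSubgroup R // Nat.card I = p} = p + 1 := by
    have hcount := AddSubgroup.card_subgroups_card_eq_prime_mul_sub_one hp hexp
    rw [hR, show p ^ 2 - 1 = (p + 1) * (p - 1) by rw [← Nat.sq_sub_sq, one_pow]] at hcount
    exact Nat.eq_of_mul_eq_mul_right (Nat.sub_pos_of_lt hp.one_lt) hcount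
  have hproper {I : AddSubgroup R} (hI : Nat.card I = p) : I ≠ ⊤ := by
    rintro rfl
    rw [AddSubgroup.card_top, hR] at hI
    exact (lt_self_pow₀ hp.one_lt one_lt_two).ne' hI
  let e := Finite.equivFinOfCardEq hlines
  refine ⟨fun i => (e.symm i).1, fun i => ⟨h _ (e.symm i).2, hproper (e.symm i).2⟩, fun x => ?_⟩
  by_cases hx0 : x = 0
  · exact ⟨0, hx0 ▸ zero_mem _⟩
  · refine ⟨e ⟨AddSubgroup.zmultiples x, ?_⟩, ?_⟩
    · rw [Nat.card_zmultiples, addOrderOf_eq_prime (hexp x) hx0]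
    · simp

end LeftIdealCover

/-- For a ring `R` of order `p²` (with `p • x = 0` for all `x`), being a union of
finitely many proper left ideals is equivalent to every additive subgroup of
order `p` being a left ideal; and in that case `R` is the union of `p + 1`
proper left ideals but not of any `p` proper left ideals. -/
theorem left_ideal_cover_of_order_p_sq (p : ℕ) (hp : p.Prime)
    (R : Type*) [NonUnitalRing R] (hcard : Nat.card R = p ^ 2)
    (hchar : ∀ x : R, p • x = 0) :
    ((∃ (n : ℕ) (f : Fin n → AddSubgroup R),
        (∀ i, IsLeftIdeal (f i) ∧ f i ≠ ⊤) ∧ ∀ x : R, ∃ i, x ∈ f i) ↔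
      (∀ I : AddSubgroup R, Nat.card I = p → IsLeftIdeal I)) ∧
    ((∀ I : AddSubgroup R, Nat.card I = p → IsLeftIdeal I) →
      (∃ f : Fin (p + 1) → AddSubgroup R,
        (∀ i, IsLeftIdeal (f i) ∧ f i ≠ ⊤) ∧ ∀ x : R, ∃ i, x ∈ f i) ∧
      ¬ ∃ f : Fin p → AddSubgroup R,
        (∀ i, IsLeftIdeal (f i) ∧ f i ≠ ⊤) ∧ ∀ x : R, ∃ i, x ∈ f i) := by
  have hcover := exists_isProperLeftIdealCover_fin_succ hp hcard hchar
  refine ⟨⟨fun ⟨_, _, hf⟩ _ hI => ?_, fun h => ⟨p + 1, hcover h⟩⟩, fun h => ⟨hcover h, ?_⟩⟩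
  · exact IsProperLeftIdealCover.isLeftIdeal_of_card_eq_prime hp hcard hf hI
  · rintro ⟨f, hf, hcov⟩
    exact AddSubgroup.not_forall_exists_mem_of_card_eq_prime_sq hp hcard f (fun i => (hf i).2) hcov
end

section
/- Let p be a prime and let R be a ring with exactly p³ elements containing elements a, b, c such that p•a = p•b = p•c = 0, the additive group of R is generated by a, b, c, and a² = a, ba = b, ac = c, b² = c² = ab = bc = ca = cb = 0. Then no proper two-sided ideal of R contains a; consequently, R is not the union of any family of proper two-sided ideals. -/
theorem IsTwoSidedIdeal.eq_top_of_mem {R : Type*} [NonUnitalRing R] {I : AddSubgroup R}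
    (hI : IsTwoSidedIdeal I) {a b c : R} (hgen : AddSubgroup.closure {a, b, c} = ⊤)
    (hba : b * a = b) (hac : a * c = c) (haI : a ∈ I) : I = ⊤ := by
  rw [eq_top_iff, ← hgen, AddSubgroup.closure_le]
  rintro x (rfl | rfl | rfl)
  · exact haI
  · exact hba ▸ hI.1 x haI
  · exact hac ▸ hI.2 x haI

theorem not_forall_exists_mem_of_forall_notMem {R : Type*} [NonUnitalRing R] {a : R}
    (ha : ∀ I : AddSubgroup R, IsTwoSidedIdeal I → I ≠ ⊤ → a ∉ I)
    {ι : Type*} (f : ι → AddSubgroup R) (hf : ∀ i, IsTwoSidedIdeal (f i) ∧ f i ≠ ⊤) :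
    ¬ ∀ x : R, ∃ i, x ∈ f i := fun hcov ↦
  let ⟨i, hi⟩ := hcov a
  ha (f i) (hf i).1 (hf i).2 hi

theorem R4_not_union_of_two_sided_ideals_general
    (R : Type*) [NonUnitalRing R] (a b c : R)
    (hgen : AddSubgroup.closure {a, b, c} = ⊤)
    (hba : b * a = b) (hac : a * c = c) :
    (∀ I : AddSubgroup R, IsTwoSidedIdeal I → I ≠ ⊤ → a ∉ I) ∧
    (∀ (ι : Type*) (f : ι → AddSubgroup R),
      (∀ i, IsTwoSidedIdeal (f i) ∧ f i ≠ ⊤) → ¬ (∀ x : R, ∃ i, x ∈ f i)) := by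
  have notMem : ∀ I : AddSubgroup R, IsTwoSidedIdeal I → I ≠ ⊤ → a ∉ I :=
    fun I hI hne haI ↦ hne (hI.eq_top_of_mem hgen hba hac haI)
  exact ⟨notMem, fun _ ↦ not_forall_exists_mem_of_forall_notMem notMem⟩

/-- In the ring `R₄` of order `p³`, no proper two-sided ideal contains `a`;
consequently `R₄` is not the union of any family of proper two-sided ideals. -/
theorem R4_not_union_of_two_sided_ideals (p : ℕ) (hp : p.Prime)
    (R : Type*) [NonUnitalRing R] (hcard : Nat.card R = p ^ 3) (a b c : R)
    (ha : p • a = 0) (hb : p • b = 0) (hc : p • c = 0)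
    (hgen : AddSubgroup.closure {a, b, c} = ⊤)
    (haa : a * a = a) (hba : b * a = b) (hac : a * c = c)
    (hbb : b * b = 0) (hcc : c * c = 0) (hab : a * b = 0)
    (hbc : b * c = 0) (hca : c * a = 0) (hcb : c * b = 0) :
    (∀ I : AddSubgroup R, IsTwoSidedIdeal I → I ≠ ⊤ → a ∉ I) ∧
    (∀ (ι : Type*) (f : ι → AddSubgroup R),
      (∀ i, IsTwoSidedIdeal (f i) ∧ f i ≠ ⊤) → ¬ (∀ x : R, ∃ i, x ∈ f i)) :=
  R4_not_union_of_two_sided_ideals_general R a b c hgen hba hac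
end

section
/- Let p be a prime and let R be a ring with exactly p³ elements containing elements a, b, c such that p•a = p•b = p•c = 0, the additive group of R is generated by a, b, c, and a² = a, ba = b, ac = c, b² = c² = ab = bc = ca = cb = 0. Then R is the union of p + 1 proper right ideals, and R is not the union of any p proper right ideals. -/
open Module Submodule
open scoped Pointwise

theorem AddSubgroup.prime_le_index_of_ne_top {G : Type*} [AddGroup G] {p n : ℕ} (hp : p.Prime)
    (hG : Nat.card G = p ^ n) {H : AddSubgroup G} (hH : H ≠ ⊤) : p ≤ H.index := by
  obtain ⟨k, -, hk⟩ := (Nat.dvd_prime_pow hp).mp (hG ▸ H.index_dvd_card)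
  rcases k with _ | k
  · exact absurd (AddSubgroup.index_eq_one.mp (by simpa using hk)) hH
  · rw [hk, pow_succ]
    exact Nat.le_mul_of_pos_left p (pow_pos hp.pos k)

theorem AddSubgroup.iUnion_ne_univ_of_card_le_index {G ι : Type*} [AddGroup G] [Finite G]
    [Fintype ι] (hι : 1 < Fintype.card ι) (H : ι → AddSubgroup G)
    (hind : ∀ i, Fintype.card ι ≤ (H i).index) : ⋃ i, (H i : Set G) ≠ Set.univ := by
  classical
  intro hcov
  have hcov' : ⋃ i ∈ Finset.univ, (0 : G) +ᵥ (H i : Set G) = Set.univ := by simpa using hcov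
  have hsum : ∑ i, ((H i).index : ℚ)⁻¹ = 1 := by
    refine le_antisymm ?_ (AddSubgroup.one_le_sum_inv_index_of_leftCoset_cover hcov')
    calc ∑ i, ((H i).index : ℚ)⁻¹ ≤ ∑ _i : ι, ((Fintype.card ι : ℕ) : ℚ)⁻¹ := by
          gcongr with i
          exact hind i
      _ = 1 := by
          rw [Finset.sum_const, Finset.card_univ, nsmul_eq_mul]
          exact mul_inv_cancel₀ (Nat.cast_ne_zero.mpr (by omega))
  have hdisj := AddSubgroup.pairwiseDisjoint_leftCoset_cover_of_sum_neg_index_eq_zero hcov' hsum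
  have hmem (k : ι) : k ∈ Finset.univ.filter fun i => (H i).FiniteIndex := by
    simp [AddSubgroup.finiteIndex_of_finite]
  obtain ⟨i, j, hij⟩ := Fintype.exists_pair_of_one_lt_card hι
  exact Set.disjoint_left.mp (hdisj (hmem i) (hmem j) hij)
    (by simp : (0 : G) ∈ (0 : G) +ᵥ (H i : Set G)) (by simp)

theorem AddSubgroup.nsmul_eq_zero_of_closure_eq_top {G : Type*} [AddCommGroup G] {s : Set G}
    {n : ℕ} (hs : closure s = ⊤) (h : ∀ x ∈ s, n • x = 0) (x : G) : n • x = 0 :=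
  (AddSubgroup.closure_le (nsmulAddMonoidHom n : G →+ G).ker).mpr h
    (hs ▸ AddSubgroup.mem_top x)

section Pencil

variable {K V : Type*} [Field K] [AddCommGroup V] [Module K V]

theorem Submodule.span_pair_ne_top_of_finrank_eq_three (hV : finrank K V = 3) (x y : V) :
    span K {x, y} ≠ ⊤ := by
  classical
  intro h
  have := finrank_span_le_card (R := K) ({x, y} : Set V)
  rw [h, finrank_top, hV, Set.toFinset_insert, Set.toFinset_singleton] at this
  exact absurd (this.trans Finset.card_le_two) (by norm_num)

theorem Submodule.mem_span_pair_or_of_mem_span_triple {a b c x : V}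
    (hx : x ∈ span K {a, b, c}) :
    x ∈ span K {b, c} ∨ ∃ k : K, x ∈ span K {a + k • b, c} := by
  obtain ⟨α, β, γ, rfl⟩ := mem_span_triple.mp hx
  by_cases hα : α = 0
  · subst hα
    exact Or.inl (mem_span_pair.mpr ⟨β, γ, by rw [zero_smul, zero_add]⟩)
  · refine Or.inr ⟨α⁻¹ * β, mem_span_pair.mpr ⟨α, γ, ?_⟩⟩
    rw [smul_add, smul_smul, mul_inv_cancel_left₀ hα]

/-- The `|K| + 1` planes through `c` in `span K {a, b, c}`, one over each line of the quotient
by `K ∙ c`. -/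
def Submodule.pencil (a b c : V) : Option K → Submodule K V
  | none => span K {b, c}
  | some k => span K {a + k • b, c}

theorem Submodule.exists_fin_cover_of_finrank_eq_three [Finite K] (hV : finrank K V = 3)
    {a b c : V} (hspan : span K {a, b, c} = ⊤) :
    ∃ W : Fin (Nat.card K + 1) → Submodule K V,
      (∀ i, c ∈ W i ∧ W i ≠ ⊤) ∧ ∀ x, ∃ i, x ∈ W i := by
  have : Fintype K := Fintype.ofFinite K
  let e : Option K ≃ Fin (Nat.card K + 1) :=
    Fintype.equivFinOfCardEq (by rw [Fintype.card_option, Nat.card_eq_fintype_card])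
  refine ⟨fun i => pencil a b c (e.symm i), fun i => ⟨?_, ?_⟩, fun x => ?_⟩
  · dsimp only
    cases e.symm i <;> exact subset_span (by simp)
  · dsimp only
    cases e.symm i <;> exact span_pair_ne_top_of_finrank_eq_three hV _ _
  · rcases mem_span_pair_or_of_mem_span_triple (hspan ▸ mem_top : x ∈ span K {a, b, c})
      with hx | ⟨k, hx⟩
    · exact ⟨e none, by simpa [pencil] using hx⟩
    · exact ⟨e (some k), by simpa [pencil] using hx⟩

end Pencil

theorem AddCommGroup.exists_fin_cover_of_closure_eq_top {V : Type*} [AddCommGroup V] {p : ℕ}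
    (hp : p.Prime) (hcard : Nat.card V = p ^ 3) (htors : ∀ x : V, p • x = 0) {a b c : V}
    (hgen : AddSubgroup.closure {a, b, c} = ⊤) :
    ∃ W : Fin (p + 1) → AddSubgroup V, (∀ i, c ∈ W i ∧ W i ≠ ⊤) ∧ ∀ x, ∃ i, x ∈ W i := by
  have : Fact p.Prime := ⟨hp⟩
  obtain ⟨_⟩ : Nonempty (Module (ZMod p) V) := ⟨AddCommGroup.zmodModule htors⟩
  have : Finite V := Nat.finite_of_card_ne_zero (by simp [hcard, hp.ne_zero])
  have hdim : finrank (ZMod p) V = 3 := by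
    refine Nat.pow_right_injective hp.two_le (?_ : p ^ _ = p ^ 3)
    rw [← hcard, natCard_eq_pow_finrank (K := ZMod p), Nat.card_zmod]
  have hspan : span (ZMod p) {a, b, c} = ⊤ :=
    toAddSubgroup_eq_top.mp <| top_le_iff.mp <| hgen ▸ (AddSubgroup.closure_le _).mpr subset_span
  obtain ⟨W, hW, hcov⟩ := Nat.card_zmod p ▸ exists_fin_cover_of_finrank_eq_three hdim hspan
  exact ⟨fun i => (W i).toAddSubgroup, fun i => ⟨(hW i).1, by simpa using (hW i).2⟩, hcov⟩

structure R4Relations {R : Type*} [NonUnitalRing R] (a b c : R) : Prop where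
  aa : a * a = a
  ba : b * a = b
  ac : a * c = c
  bb : b * b = 0
  cc : c * c = 0
  ab : a * b = 0
  bc : b * c = 0
  ca : c * a = 0
  cb : c * b = 0

namespace R4Relations

variable {R : Type*} [NonUnitalRing R] {a b c : R}

theorem right_mul_generators (h : R4Relations a b c)
    (hgen : AddSubgroup.closure {a, b, c} = ⊤) (x : R) :
    x * a - x ∈ AddSubgroup.zmultiples c ∧ x * b = 0 ∧ x * c ∈ AddSubgroup.zmultiples c := by
  induction (hgen ▸ AddSubgroup.mem_top x : x ∈ AddSubgroup.closure {a, b, c})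
    using AddSubgroup.closure_induction with
  | mem y hy =>
    rcases hy with rfl | rfl | rfl
    · simp [h.aa, h.ab, h.ac]
    · simp [h.ba, h.bb, h.bc]
    · simp [h.ca, h.cb, h.cc]
  | zero => simp
  | add x y _ _ hx hy =>
    refine ⟨?_, by simp [add_mul, hx.2.1, hy.2.1], ?_⟩
    · rw [add_mul, add_sub_add_comm]; exact add_mem hx.1 hy.1
    · rw [add_mul]; exact add_mem hx.2.2 hy.2.2
  | neg x _ hx =>
    refine ⟨?_, by simp [hx.2.1], ?_⟩
    · rw [neg_mul, neg_sub_neg, ← neg_sub]; exact neg_mem hx.1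
    · rw [neg_mul]; exact neg_mem hx.2.2

theorem isRightIdeal_of_mem (h : R4Relations a b c) (hgen : AddSubgroup.closure {a, b, c} = ⊤)
    {S : AddSubgroup R} (hc : c ∈ S) : IsRightIdeal S := by
  have hcS : AddSubgroup.zmultiples c ≤ S := AddSubgroup.zmultiples_le.mpr hc
  intro r x hx
  obtain ⟨hxa, hxb, hxc⟩ := h.right_mul_generators hgen x
  induction (hgen ▸ AddSubgroup.mem_top r : r ∈ AddSubgroup.closure {a, b, c})
    using AddSubgroup.closure_induction with
  | mem y hy =>
    rcases hy with rfl | rfl | rfl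
    · simpa using add_mem (hcS hxa) hx
    · simp [hxb]
    · exact hcS hxc
  | zero => simp
  | add y z _ _ hy hz => rw [mul_add]; exact add_mem hy hz
  | neg y _ hy => rw [mul_neg]; exact neg_mem hy

end R4Relations

/-- The ring `R₄` of order `p³` is the union of `p + 1` proper right ideals,
but not of any `p` proper right ideals. -/
theorem R4_right_ideal_covering_number (p : ℕ) (hp : p.Prime)
    (R : Type*) [NonUnitalRing R] (hcard : Nat.card R = p ^ 3) (a b c : R)
    (ha : p • a = 0) (hb : p • b = 0) (hc : p • c = 0)
    (hgen : AddSubgroup.closure {a, b, c} = ⊤)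
    (haa : a * a = a) (hba : b * a = b) (hac : a * c = c)
    (hbb : b * b = 0) (hcc : c * c = 0) (hab : a * b = 0)
    (hbc : b * c = 0) (hca : c * a = 0) (hcb : c * b = 0) :
    (∃ f : Fin (p + 1) → AddSubgroup R,
      (∀ i, IsRightIdeal (f i) ∧ f i ≠ ⊤) ∧ ∀ x : R, ∃ i, x ∈ f i) ∧
    ¬ ∃ f : Fin p → AddSubgroup R,
      (∀ i, IsRightIdeal (f i) ∧ f i ≠ ⊤) ∧ ∀ x : R, ∃ i, x ∈ f i := by
  have hrel : R4Relations a b c := ⟨haa, hba, hac, hbb, hcc, hab, hbc, hca, hcb⟩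
  refine ⟨?_, fun ⟨f, hf, hcov⟩ => ?_⟩
  · obtain ⟨W, hW, hcovW⟩ := AddCommGroup.exists_fin_cover_of_closure_eq_top hp hcard
      (AddSubgroup.nsmul_eq_zero_of_closure_eq_top hgen (by simp [ha, hb, hc])) hgen
    exact ⟨W, fun i => ⟨hrel.isRightIdeal_of_mem hgen (hW i).1, (hW i).2⟩, hcovW⟩
  · have : Finite R := Nat.finite_of_card_ne_zero (by simp [hcard, hp.ne_zero])
    refine AddSubgroup.iUnion_ne_univ_of_card_le_index (by simpa using hp.one_lt) f
      (fun i => by simpa using AddSubgroup.prime_le_index_of_ne_top hp hcard (hf i).2) ?_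
    exact Set.eq_univ_of_forall fun x => Set.mem_iUnion.mpr (hcov x)
end

section
/- Let R be a ring. Then R is the union of 3 proper two-sided ideals but not the union of 2 proper two-sided ideals if and only if there exists a two-sided ideal I of R such that the quotient ring R/I has exactly 4 elements, x + x = 0 for every x ∈ R/I, and x·y = 0 for all x, y ∈ R/I. -/
/-!
Three proper subgroups `A, B, C` covering a group meet pairwise in their common intersection `J`:
if `x ∈ A ∩ B` and `c ∈ C` lies in neither `A` nor `B`, then `x + c` can only lie in `C`.
Translating by such a `c` also shows that `J` has index two in each of them, so `G / J` is the
Klein four-group, represented by `0` and one element of each subgroup outside the other two.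
For ideals, `a * r ∈ A ∩ B = J` whenever `a ∈ A` and `r ∈ B`, and every `r` is a difference of two
elements outside `A`, so all products lie in `J`.
Conversely, the three subgroups of order two of the Klein four-group pull back to a cover of `R`
by proper ideals, and no group is the union of two proper subgroups.
-/

theorem AddSubgroup.exists_notMem_and_notMem {G : Type*} [AddGroup G] {K L : AddSubgroup G}
    (hK : K ≠ ⊤) (hL : L ≠ ⊤) : ∃ x, x ∉ K ∧ x ∉ L := by
  by_contra! h
  rcases AddSubgroupClass.subset_union.1 fun x (_ : x ∈ (⊤ : AddSubgroup G)) =>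
    (em (x ∈ K)).imp_right (h x) with h | h
  exacts [hK (top_le_iff.1 h), hL (top_le_iff.1 h)]

theorem Fin.exists_third {i j : Fin 3} (h : i ≠ j) :
    ∃ k, k ≠ i ∧ k ≠ j ∧ ∀ m, m = i ∨ m = j ∨ m = k := by
  revert i j; decide

namespace AddSubgroup

section ThreeCover

variable {G : Type*} [AddGroup G] {f : Fin 3 → AddSubgroup G}

theorem exists_mem_forall_ne_notMem_of_cover (hcov : ∀ x, ∃ i, x ∈ f i) (hf : ∀ i, f i ≠ ⊤)
    (i : Fin 3) : ∃ y ∈ f i, ∀ j ≠ i, y ∉ f j := by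
  obtain ⟨j, hji⟩ := exists_ne i
  obtain ⟨k, hki, hkj, hall⟩ := Fin.exists_third hji.symm
  obtain ⟨y, hyj, hyk⟩ := exists_notMem_and_notMem (hf j) (hf k)
  obtain ⟨m, hym⟩ := hcov y
  refine ⟨y, ?_, fun l hli => ?_⟩
  · rcases hall m with rfl | rfl | rfl
    exacts [hym, absurd hym hyj, absurd hym hyk]
  · rcases hall l with rfl | rfl | rfl
    exacts [absurd rfl hli, hyj, hyk]

theorem mem_iInf_of_mem_of_mem (hcov : ∀ x, ∃ i, x ∈ f i) (hf : ∀ i, f i ≠ ⊤) {i j : Fin 3}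
    (hij : i ≠ j) {x : G} (hi : x ∈ f i) (hj : x ∈ f j) : x ∈ ⨅ k, f k := by
  obtain ⟨k, hki, hkj, hall⟩ := Fin.exists_third hij
  refine mem_iInf.2 fun m => ?_
  rcases hall m with rfl | rfl | rfl
  · exact hi
  · exact hj
  obtain ⟨y, hy, hy'⟩ := exists_mem_forall_ne_notMem_of_cover hcov hf m
  obtain ⟨l, hl⟩ := hcov (x + y)
  rcases hall l with rfl | rfl | rfl
  · exact absurd ((add_mem_cancel_left hi).1 hl) (hy' l hki.symm)
  · exact absurd ((add_mem_cancel_left hj).1 hl) (hy' l hkj.symm)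
  · exact (add_mem_cancel_right hy).1 hl

theorem notMem_of_notMem_iInf (hcov : ∀ x, ∃ i, x ∈ f i) (hf : ∀ i, f i ≠ ⊤) {i j : Fin 3}
    (hji : j ≠ i) {x : G} (hi : x ∈ f i) (hx : x ∉ ⨅ k, f k) : x ∉ f j :=
  fun hj => hx (mem_iInf_of_mem_of_mem hcov hf hji.symm hi hj)

theorem sub_mem_iInf_of_mem (hcov : ∀ x, ∃ i, x ∈ f i) (hf : ∀ i, f i ≠ ⊤) {i : Fin 3}
    {x x' : G} (hx : x ∈ f i) (hx' : x' ∈ f i) (hxJ : x ∉ ⨅ k, f k) (hx'J : x' ∉ ⨅ k, f k) :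
    x - x' ∈ ⨅ k, f k := by
  obtain ⟨j, hji⟩ := exists_ne i
  obtain ⟨k, hki, hkj, hall⟩ := Fin.exists_third hji.symm
  obtain ⟨c, hc, hc'⟩ := exists_mem_forall_ne_notMem_of_cover hcov hf k
  have translate : ∀ z ∈ f i, z ∉ ⨅ k, f k → z + c ∈ f j := fun z hz hzJ => by
    obtain ⟨l, hl⟩ := hcov (z + c)
    rcases hall l with rfl | rfl | rfl
    · exact absurd ((add_mem_cancel_left hz).1 hl) (hc' l hki.symm)
    · exact hl
    · exact absurd ((add_mem_cancel_right hc).1 hl) (notMem_of_notMem_iInf hcov hf hki hz hzJ)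
  have hj : x - x' ∈ f j :=
    add_sub_add_right_eq_sub x x' c ▸ (f j).sub_mem (translate x hx hxJ) (translate x' hx' hx'J)
  exact mem_iInf_of_mem_of_mem hcov hf hji.symm ((f i).sub_mem hx hx') hj

theorem add_self_mem_iInf (hcov : ∀ x, ∃ i, x ∈ f i) (hf : ∀ i, f i ≠ ⊤) (x : G) :
    x + x ∈ ⨅ k, f k := by
  obtain ⟨i, hi⟩ := hcov x
  by_contra h
  have hxJ : x ∉ ⨅ k, f k := fun hx => h ((⨅ k, f k).add_mem hx hx)
  exact hxJ (by simpa using sub_mem_iInf_of_mem hcov hf ((f i).add_mem hi hi) hi h hxJ)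

end ThreeCover

end AddSubgroup

theorem AddSubgroup.zmultiples_ne_top_of_add_self_eq_zero {G : Type*} [AddGroup G]
    (hcard : 2 < Nat.card G) {x : G} (hx : x + x = 0) : zmultiples x ≠ ⊤ := by
  intro h
  have hle : addOrderOf x ≤ 2 :=
    Nat.le_of_dvd two_pos (addOrderOf_dvd_of_nsmul_eq_zero (by rwa [two_nsmul]))
  have hcard' := Nat.card_zmultiples x
  rw [h, AddSubgroup.card_top] at hcard'
  omega

theorem AddGroup.exists_three_cover_of_natCard_eq_four {G : Type*} [AddGroup G]
    (hcard : Nat.card G = 4) (h2 : ∀ x : G, x + x = 0) :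
    ∃ f : Fin 3 → AddSubgroup G, (∀ i, f i ≠ ⊤) ∧ ∀ x, ∃ i, x ∈ f i := by
  classical
  have : Finite G := Nat.finite_of_card_ne_zero (by omega)
  have hne : Nat.card {x : G // x ≠ 0} = 3 := by
    have := Nat.card_congr (Equiv.optionSubtypeNe (0 : G))
    rw [Finite.card_option] at this
    omega
  let e := (Finite.equivFinOfCardEq hne).symm
  refine ⟨fun i => AddSubgroup.zmultiples (e i : G),
    fun i => AddSubgroup.zmultiples_ne_top_of_add_self_eq_zero (by omega) (h2 _), fun x => ?_⟩
  by_cases hx : x = 0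
  · exact ⟨0, hx ▸ zero_mem (AddSubgroup.zmultiples (e 0 : G))⟩
  · exact ⟨e.symm ⟨x, hx⟩, by simp [AddSubgroup.mem_zmultiples]⟩

section Ring

variable {R : Type*} [NonUnitalRing R]

theorem AddSubgroup.mul_mem_iInf_of_cover {f : Fin 3 → AddSubgroup R}
    (hcov : ∀ x, ∃ i, x ∈ f i) (hf : ∀ i, f i ≠ ⊤) (hideal : ∀ i, IsTwoSidedIdeal (f i))
    (a b : R) : a * b ∈ ⨅ k, f k := by
  obtain ⟨i, ha⟩ := hcov a
  have outside : ∀ r ∉ f i, a * r ∈ ⨅ k, f k := fun r hr => by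
    obtain ⟨j, hj⟩ := hcov r
    have hji : j ≠ i := by rintro rfl; exact hr hj
    exact mem_iInf_of_mem_of_mem hcov hf hji.symm ((hideal i).2 r ha) ((hideal j).1 a hj)
  by_cases hb : b ∈ f i
  · obtain ⟨z, hz⟩ : ∃ z, z ∉ f i := by simpa [AddSubgroup.eq_top_iff'] using hf i
    have hbz : b + z ∉ f i := fun h => hz ((add_mem_cancel_left hb).1 h)
    simpa [mul_add] using (⨅ k, f k).sub_mem (outside _ hbz) (outside z hz)
  · exact outside b hb

def IsTwoSidedIdeal.toTwoSidedIdeal {I : AddSubgroup R} (hI : IsTwoSidedIdeal I) :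
    TwoSidedIdeal R :=
  .mk' I I.zero_mem I.add_mem I.neg_mem (fun hy => hI.1 _ hy) (fun hx => hI.2 _ hx)

@[simp]
theorem IsTwoSidedIdeal.mem_toTwoSidedIdeal {I : AddSubgroup R} (hI : IsTwoSidedIdeal I)
    {x : R} : x ∈ hI.toTwoSidedIdeal ↔ x ∈ I :=
  TwoSidedIdeal.mem_mk' ..

namespace TwoSidedIdeal

variable (I : TwoSidedIdeal R)

theorem quotient_mk_eq_iff {a b : R} : (a : I.ringCon.Quotient) = b ↔ a - b ∈ I :=
  RingCon.eq _ |>.trans (I.rel_iff a b)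

theorem quotient_mk_eq_zero_iff {a : R} : (a : I.ringCon.Quotient) = 0 ↔ a ∈ I := by
  simpa using I.quotient_mk_eq_iff (b := 0)

theorem quotient_mk_surjective : Function.Surjective ((↑) : R → I.ringCon.Quotient) :=
  Quotient.mk''_surjective

def quotientMkAddHom : R →+ I.ringCon.Quotient :=
  AddMonoidHom.mk' (↑) (RingCon.coe_add _)

theorem isTwoSidedIdeal_comap_quotientMkAddHom
    (hmul : ∀ x y : I.ringCon.Quotient, x * y = 0) (H : AddSubgroup I.ringCon.Quotient) :
    IsTwoSidedIdeal (H.comap I.quotientMkAddHom) := by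
  have mul_mem (a b : R) : a * b ∈ H.comap I.quotientMkAddHom := by
    show ((a * b : R) : I.ringCon.Quotient) ∈ H
    rw [RingCon.coe_mul, hmul]
    exact H.zero_mem
  exact ⟨fun r x _ => mul_mem r x, fun r x _ => mul_mem x r⟩

theorem natCard_quotient_eq_four_of_cover {f : Fin 3 → AddSubgroup R}
    (hcov : ∀ x, ∃ i, x ∈ f i) (hf : ∀ i, f i ≠ ⊤)
    (hI : ∀ x, x ∈ I ↔ x ∈ ⨅ k, f k) : Nat.card I.ringCon.Quotient = 4 := by
  choose y hy hy' using AddSubgroup.exists_mem_forall_ne_notMem_of_cover hcov hf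
  have hyI (i : Fin 3) : y i ∉ I := fun h =>
    have ⟨j, hji⟩ := exists_ne i
    hy' i j hji (AddSubgroup.mem_iInf.1 ((hI _).1 h) j)
  have hcard : Nat.card (Option (Fin 3)) = 4 := by simp
  rw [← hcard]
  refine (Nat.card_eq_of_bijective (fun o => o.elim 0 fun i => (y i : I.ringCon.Quotient))
    ⟨?_, fun q => ?_⟩).symm
  · rintro (_ | i) (_ | j) h <;>
      simp only [Option.elim_none, Option.elim_some, I.quotient_mk_eq_iff,
        I.quotient_mk_eq_zero_iff] at h
    · rfl
    · exact absurd (I.quotient_mk_eq_zero_iff.1 h.symm) (hyI j)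
    · exact absurd h (hyI i)
    · by_contra hij
      have hj : y i - y j ∈ f j := AddSubgroup.mem_iInf.1 ((hI _).1 h) j
      exact hy' i j (fun hji => hij (congrArg some hji.symm))
        (by simpa using (f j).add_mem hj (hy j))
  · obtain ⟨x, rfl⟩ := I.quotient_mk_surjective q
    obtain ⟨i, hi⟩ := hcov x
    by_cases hx : x ∈ ⨅ k, f k
    · exact ⟨none, (I.quotient_mk_eq_zero_iff.2 ((hI x).2 hx)).symm⟩
    · refine ⟨some i, I.quotient_mk_eq_iff.2 ((hI _).2 ?_)⟩
      exact AddSubgroup.sub_mem_iInf_of_mem hcov hf (hy i) hi (fun h => hyI i ((hI _).2 h)) hx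

end TwoSidedIdeal

def HasProperIdealCover (R : Type*) [NonUnitalRing R] (n : ℕ) : Prop :=
  ∃ f : Fin n → AddSubgroup R, (∀ i, IsTwoSidedIdeal (f i) ∧ f i ≠ ⊤) ∧ ∀ x : R, ∃ i, x ∈ f i

theorem not_hasProperIdealCover_two : ¬ HasProperIdealCover R 2 := by
  rintro ⟨f, hf, hcov⟩
  obtain ⟨x, hx0, hx1⟩ := AddSubgroup.exists_notMem_and_notMem (hf 0).2 (hf 1).2
  obtain ⟨i, hi⟩ := hcov x
  fin_cases i
  exacts [hx0 hi, hx1 hi]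

theorem HasProperIdealCover.exists_quotient (h : HasProperIdealCover R 3) :
    ∃ I : TwoSidedIdeal R, Nat.card I.ringCon.Quotient = 4 ∧
      (∀ x : I.ringCon.Quotient, x + x = 0) ∧ (∀ x y : I.ringCon.Quotient, x * y = 0) := by
  obtain ⟨f, hf, hcov⟩ := h
  have hne (i : Fin 3) : f i ≠ ⊤ := (hf i).2
  have hmul := AddSubgroup.mul_mem_iInf_of_cover hcov hne fun i => (hf i).1
  have hJ : IsTwoSidedIdeal (⨅ k, f k) := ⟨fun r x _ => hmul r x, fun r x _ => hmul x r⟩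
  refine ⟨hJ.toTwoSidedIdeal, ?_, fun x => ?_, fun x y => ?_⟩
  · exact hJ.toTwoSidedIdeal.natCard_quotient_eq_four_of_cover hcov hne
      fun _ => hJ.mem_toTwoSidedIdeal
  · obtain ⟨a, rfl⟩ := hJ.toTwoSidedIdeal.quotient_mk_surjective x
    rw [← RingCon.coe_add, TwoSidedIdeal.quotient_mk_eq_zero_iff, hJ.mem_toTwoSidedIdeal]
    exact AddSubgroup.add_self_mem_iInf hcov hne a
  · obtain ⟨a, rfl⟩ := hJ.toTwoSidedIdeal.quotient_mk_surjective x
    obtain ⟨b, rfl⟩ := hJ.toTwoSidedIdeal.quotient_mk_surjective y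
    rw [← RingCon.coe_mul, TwoSidedIdeal.quotient_mk_eq_zero_iff, hJ.mem_toTwoSidedIdeal]
    exact hmul a b

theorem hasProperIdealCover_three_of_quotient (I : TwoSidedIdeal R)
    (hcard : Nat.card I.ringCon.Quotient = 4) (hadd : ∀ x : I.ringCon.Quotient, x + x = 0)
    (hmul : ∀ x y : I.ringCon.Quotient, x * y = 0) : HasProperIdealCover R 3 := by
  obtain ⟨f, hf, hcov⟩ := AddGroup.exists_three_cover_of_natCard_eq_four hcard hadd
  refine ⟨fun i => (f i).comap I.quotientMkAddHom, fun i => ⟨?_, ?_⟩, fun x => hcov x⟩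
  · exact I.isTwoSidedIdeal_comap_quotientMkAddHom hmul (f i)
  · simpa using (AddSubgroup.comap_injective I.quotient_mk_surjective).ne (hf i)

end Ring

/-- A ring has two-sided ideal covering number exactly 3 if and only if it has a
factor ring of order 4 with elementary abelian additive group and zero
multiplication. -/
theorem two_sided_ideal_covering_number_eq_three (R : Type*) [NonUnitalRing R] :
    ((∃ f : Fin 3 → AddSubgroup R,
        (∀ i, IsTwoSidedIdeal (f i) ∧ f i ≠ ⊤) ∧ ∀ x : R, ∃ i, x ∈ f i) ∧
      ¬ ∃ f : Fin 2 → AddSubgroup R,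
        (∀ i, IsTwoSidedIdeal (f i) ∧ f i ≠ ⊤) ∧ ∀ x : R, ∃ i, x ∈ f i) ↔
    ∃ I : TwoSidedIdeal R,
      Nat.card I.ringCon.Quotient = 4 ∧
      (∀ x : I.ringCon.Quotient, x + x = 0) ∧
      (∀ x y : I.ringCon.Quotient, x * y = 0) :=
  ⟨fun ⟨h3, _⟩ => HasProperIdealCover.exists_quotient h3, fun ⟨I, hcard, hadd, hmul⟩ =>
    ⟨hasProperIdealCover_three_of_quotient I hcard hadd hmul, not_hasProperIdealCover_two⟩⟩
end
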